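/- Stable partition-relation pairs are upward directed: for any two stable partition-relation pairs (P₁, ≤₁) and (P₂, ≤₂) over the same labeled transition system G (with respect to the same B), there exists a stable partition-relation pair (P₃, ≤₃) with (P₁, ≤₁) ◁ (P₃, ≤₃) and (P₂, ≤₂) ◁ (P₃, ≤₃). -/

import Mathlib

variable {S A : Type*}

/-- R is a partial bisimulation w.r.t. the bisimulation action set B. -/
def IsPB (tm : S → Prop) (tr : S → A → S → Prop) (B : Set A)
    (R : S → S → Prop) : Prop :=
  ∀ p q, R p q →
    (tm p → tm q) ∧
    (∀ a p', tr p a p' → ∃ q', tr q a q' ∧ R p' q') ∧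
    (∀ b q', b ∈ B → tr q b q' → ∃ p', tr p b p' ∧ R p' q')

/-- The partial bisimilarity preorder ≤_B. -/
def PbLe (tm : S → Prop) (tr : S → A → S → Prop) (B : Set A) (p q : S) : Prop :=
  ∃ R, IsPB tm tr B R ∧ R p q

/-- R is a simulation. -/
def IsSim (tm : S → Prop) (tr : S → A → S → Prop) (R : S → S → Prop) : Prop :=
  ∀ p q, R p q →
    (tm p → tm q) ∧
    (∀ a p', tr p a p' → ∃ q', tr q a q' ∧ R p' q')

/-- Strong similarity preorder. -/
def SimLe (tm : S → Prop) (tr : S → A → S → Prop) (p q : S) : Prop :=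
  ∃ R, IsSim tm tr R ∧ R p q

/-- R is a bisimulation: R and its inverse are simulations. -/
def IsBisim (tm : S → Prop) (tr : S → A → S → Prop) (R : S → S → Prop) : Prop :=
  IsSim tm tr R ∧ IsSim tm tr (fun p q => R q p)

/-- Strong bisimilarity. -/
def Bisimilar (tm : S → Prop) (tr : S → A → S → Prop) (p q : S) : Prop :=
  ∃ R, IsBisim tm tr R ∧ R p q

/-- A strong bisimulation: a symmetric relation matching termination and transitions. -/
def IsStrongBisim (tm : S → Prop) (tr : S → A → S → Prop) (R : S → S → Prop) : Prop :=
  Symmetric R ∧ ∀ p q, R p q →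
    (tm p ↔ tm q) ∧
    (∀ a p', tr p a p' → ∃ q', tr q a q' ∧ R p' q')

/-- P is a partition of S: nonempty, covering, pairwise-disjoint classes. -/
def IsPartition' (P : Set (Set S)) : Prop :=
  (∀ Q ∈ P, Q.Nonempty) ∧ (∀ s : S, ∃ Q ∈ P, s ∈ Q) ∧
  (∀ Q ∈ P, ∀ R ∈ P, (Q ∩ R).Nonempty → Q = R)

/-- Partition-relation pair: a partition with a partial order on its classes. -/
def IsPRP (P : Set (Set S)) (le : Set S → Set S → Prop) : Prop :=
  IsPartition' P ∧
  (∀ Q R, le Q R → Q ∈ P ∧ R ∈ P) ∧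
  (∀ Q ∈ P, le Q Q) ∧
  (∀ Q R, le Q R → le R Q → Q = R) ∧
  (∀ Q R T, le Q R → le R T → le Q T)

/-- Every state of P has an a-transition into X. -/
def AllTr (tr : S → A → S → Prop) (a : A) (P X : Set S) : Prop :=
  ∀ p ∈ P, ∃ x ∈ X, tr p a x

/-- Some state of P has an a-transition into X. -/
def ExTr (tr : S → A → S → Prop) (a : A) (P X : Set S) : Prop :=
  ∃ p ∈ P, ∃ x ∈ X, tr p a x

/-- bb(R): union of all big brother classes of R. -/
def bigBro (P : Set (Set S)) (le : Set S → Set S → Prop) (R : Set S) : Set S :=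
  {x | ∃ Q ∈ P, le R Q ∧ x ∈ Q}

/-- lb(R): union of all little brother classes of R. -/
def litBro (P : Set (Set S)) (le : Set S → Set S → Prop) (R : Set S) : Set S :=
  {x | ∃ Q ∈ P, le Q R ∧ x ∈ Q}

/-- Stability of a partition-relation pair (Definition of stability conditions a-d). -/
def IsStable (tm : S → Prop) (tr : S → A → S → Prop) (B : Set A)
    (P : Set (Set S)) (le : Set S → Set S → Prop) : Prop :=
  (∀ Q ∈ P, (∀ q ∈ Q, tm q) ∨ (∀ q ∈ Q, ¬ tm q)) ∧
  (∀ Q R, le Q R → (∀ q ∈ Q, tm q) → (∀ r ∈ R, tm r)) ∧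
  (∀ Q Q' R, R ∈ P → le Q Q' → ∀ a, ExTr tr a Q R → AllTr tr a Q' (bigBro P le R)) ∧
  (∀ Q Q' R, R ∈ P → le Q Q' → ∀ b ∈ B, ExTr tr b Q' R → AllTr tr b Q (litBro P le R))

/-- The order ◁ on partition-relation pairs. -/
def Lhd (P₁ : Set (Set S)) (le₁ : Set S → Set S → Prop)
    (P₂ : Set (Set S)) (le₂ : Set S → Set S → Prop) : Prop :=
  ∀ Q R, le₁ Q R → ∃ Q' ∈ P₂, ∃ R' ∈ P₂, Q ⊆ Q' ∧ R ⊆ R' ∧ le₂ Q' R'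

/-- The relation on states induced by a partition-relation pair. -/
def IndRel (P : Set (Set S)) (le : Set S → Set S → Prop) (p q : S) : Prop :=
  ∃ Q ∈ P, ∃ R ∈ P, le Q R ∧ p ∈ Q ∧ q ∈ R

/-- Equivalence classes of the equivalence kernel R ∩ R⁻¹ of a preorder R. -/
def eqClasses (R : S → S → Prop) : Set (Set S) :=
  {C | ∃ p, C = {q | R p q ∧ R q p}}

/-- The class order induced by a preorder R on its equivalence classes. -/
def classLe (R : S → S → Prop) (Q T : Set S) : Prop :=
  Q ∈ eqClasses R ∧ T ∈ eqClasses R ∧ ∃ p ∈ Q, ∃ q ∈ T, R p q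

/-- The little brother relation ≤' induced on a parent partition P'. -/
def IndLe (le : Set S → Set S → Prop) (P' : Set (Set S)) (Q' R' : Set S) : Prop :=
  Q' ∈ P' ∧ R' ∈ P' ∧ ∃ Q R, le Q R ∧ Q ⊆ Q' ∧ R ⊆ R'

/-- bb'(R') with respect to a parent partition. -/
def bigBro' (le : Set S → Set S → Prop) (P' : Set (Set S)) (R' : Set S) : Set S :=
  {x | ∃ Q' ∈ P', IndLe le P' R' Q' ∧ x ∈ Q'}

/-- lb'(R') with respect to a parent partition. -/
def litBro' (le : Set S → Set S → Prop) (P' : Set (Set S)) (R' : Set S) : Set S :=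
  {x | ∃ Q' ∈ P', IndLe le P' Q' R' ∧ x ∈ Q'}

/-- Stability conditions 1-4 of (P, le) with respect to a parent partition P'. -/
def StableWrt (tm : S → Prop) (tr : S → A → S → Prop) (B : Set A)
    (P : Set (Set S)) (le : Set S → Set S → Prop) (P' : Set (Set S)) : Prop :=
  (∀ Q ∈ P, ∀ a, ∀ R' ∈ P', ExTr tr a Q R' → AllTr tr a Q (bigBro' le P' R')) ∧
  (∀ Q ∈ P, ∀ b ∈ B, ∀ R' ∈ P', ExTr tr b Q R' → AllTr tr b Q (litBro' le P' R')) ∧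
  (∀ Q T, le Q T → ∀ a, ∀ R' ∈ P', AllTr tr a Q R' → AllTr tr a T (bigBro' le P' R')) ∧
  (∀ Q T, le Q T → ∀ b ∈ B, ∀ R' ∈ P', AllTr tr b T R' → AllTr tr b Q (litBro' le P' R'))

/-- P' is a parent partition of P. -/
def IsParent (P P' : Set (Set S)) : Prop :=
  IsPartition' P' ∧ ∀ Q ∈ P, ∃ Q' ∈ P', Q ⊆ Q'

/-- The partition obtained by splitting the class P₀ of P' into S' and P₀ \ S'. -/
def splitPart (P' : Set (Set S)) (P₀ Sp : Set S) : Set (Set S) :=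
  (P' \ {P₀}) ∪ {Sp, P₀ \ Sp}

/-- Some le-related pair of classes lies inside (X, Y). -/
def relBetween (le : Set S → Set S → Prop) (X Y : Set S) : Prop :=
  ∃ Q R, le Q R ∧ Q ⊆ X ∧ R ⊆ Y

/-- Sp is a splitter of the class P₀ of the parent partition P' with respect to P. -/
def IsSplitter (P : Set (Set S)) (le : Set S → Set S → Prop)
    (P' : Set (Set S)) (P₀ Sp : Set S) : Prop :=
  P₀ ∈ P' ∧ Sp ⊆ P₀ ∧ Sp.Nonempty ∧ (P₀ \ Sp).Nonempty ∧
  (∀ Q ∈ P, Q ⊆ Sp ∨ Q ∩ Sp = ∅) ∧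
  (relBetween le Sp (P₀ \ Sp) ∨
    (¬ relBetween le Sp (P₀ \ Sp) ∧ ¬ relBetween le (P₀ \ Sp) Sp))

/-- (Pr, ler) is the result Refine(P, le, P', Sp): the ◁-coarsest pair ◁-below (P, le)
stable with respect to the split parent partition. -/
def IsRefineOf (tm : S → Prop) (tr : S → A → S → Prop) (B : Set A)
    (P : Set (Set S)) (le : Set S → Set S → Prop)
    (P' : Set (Set S)) (P₀ Sp : Set S)
    (Pr : Set (Set S)) (ler : Set S → Set S → Prop) : Prop :=
  IsPRP Pr ler ∧ Lhd Pr ler P le ∧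
  StableWrt tm tr B Pr ler (splitPart P' P₀ Sp) ∧
  ∀ Q lq, IsPRP Q lq → Lhd Q lq P le →
    StableWrt tm tr B Q lq (splitPart P' P₀ Sp) → Lhd Q lq Pr ler

/-
The partial bisimilarity preorder `≤_B` is itself a partial bisimulation, and the relation
induced by any stable partition-relation pair is a partial bisimulation, hence contained in
`≤_B`. So the pair formed by the classes of `≤_B ∩ ≥_B`, ordered by `≤_B`, is stable and
lies ◁-above every stable pair; it is a common upper bound of `(P₁, ≤₁)` and `(P₂, ≤₂)`.
-/

section PbLe

variable (tm : S → Prop) (tr : S → A → S → Prop) (B : Set A)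

lemma isPB_relComp {R₁ R₂ : S → S → Prop} (h₁ : IsPB tm tr B R₁) (h₂ : IsPB tm tr B R₂) :
    IsPB tm tr B (Relation.Comp R₁ R₂) := by
  rintro x z ⟨y, hxy, hyz⟩
  obtain ⟨tm₁, fwd₁, bwd₁⟩ := h₁ x y hxy
  obtain ⟨tm₂, fwd₂, bwd₂⟩ := h₂ y z hyz
  refine ⟨tm₂ ∘ tm₁, fun a x' hx => ?_, fun b z' hb hz => ?_⟩
  · obtain ⟨y', hy, hxy'⟩ := fwd₁ a x' hx
    obtain ⟨z', hz, hyz'⟩ := fwd₂ a y' hy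
    exact ⟨z', hz, y', hxy', hyz'⟩
  · obtain ⟨y', hy, hyz'⟩ := bwd₂ b z' hb hz
    obtain ⟨x', hx, hxy'⟩ := bwd₁ b y' hb hy
    exact ⟨x', hx, y', hxy', hyz'⟩

instance : IsPreorder S (PbLe tm tr B) where
  refl p := by
    refine ⟨Eq, ?_, rfl⟩
    rintro p _ rfl
    exact ⟨id, fun _ p' h => ⟨p', h, rfl⟩, fun _ q' _ h => ⟨q', h, rfl⟩⟩
  trans := by
    rintro p q r ⟨R₁, h₁, hpq⟩ ⟨R₂, h₂, hqr⟩
    exact ⟨_, isPB_relComp tm tr B h₁ h₂, q, hpq, hqr⟩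

lemma isPB_pbLe : IsPB tm tr B (PbLe tm tr B) := by
  rintro p q ⟨R, hR, hpq⟩
  obtain ⟨htm, fwd, bwd⟩ := hR p q hpq
  exact ⟨htm,
    fun a p' h => (fwd a p' h).imp fun _ hq' => ⟨hq'.1, R, hR, hq'.2⟩,
    fun b q' hb h => (bwd b q' hb h).imp fun _ hp' => ⟨hp'.1, R, hR, hp'.2⟩⟩

lemma isPB_indRel {P : Set (Set S)} {le : Set S → Set S → Prop}
    (h : IsPRP P le) (hs : IsStable tm tr B P le) : IsPB tm tr B (IndRel P le) := by
  obtain ⟨⟨-, hcover, -⟩, -, -, -, -⟩ := h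
  obtain ⟨htmClass, htmLe, hfwd, hbwd⟩ := hs
  rintro p q ⟨Q, hQ, R, -, hQR, hp, hq⟩
  refine ⟨fun htp => ?_, fun a p' hpp' => ?_, fun b q' hb hqq' => ?_⟩
  · exact htmLe Q R hQR ((htmClass Q hQ).resolve_right fun hnot => hnot p hp htp) q hq
  · obtain ⟨T, hT, hp'⟩ := hcover p'
    obtain ⟨q', ⟨U, hU, hTU, hq'⟩, hqq'⟩ := hfwd Q R T hT hQR a ⟨p, hp, p', hp', hpp'⟩ q hq
    exact ⟨q', hqq', T, hT, U, hU, hTU, hp', hq'⟩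
  · obtain ⟨T, hT, hq'⟩ := hcover q'
    obtain ⟨p', ⟨U, hU, hUT, hp'⟩, hpp'⟩ := hbwd Q R T hT hQR b hb ⟨q, hq, q', hq', hqq'⟩ p hp
    exact ⟨p', hpp', U, hU, T, hT, hUT, hp', hq'⟩

end PbLe

section Quotient

variable {ρ : S → S → Prop}

def eqClass (ρ : S → S → Prop) (p : S) : Set S := {q | ρ p q ∧ ρ q p}

lemma eqClass_mem_eqClasses (p : S) : eqClass ρ p ∈ eqClasses ρ := ⟨p, rfl⟩

lemma lhd_eqClasses_of_indRel_le {P : Set (Set S)} {le : Set S → Set S → Prop}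
    (h : IsPRP P le) (hle : ∀ p q, IndRel P le p q → ρ p q) :
    Lhd P le (eqClasses ρ) (classLe ρ) := by
  obtain ⟨⟨hne, -, -⟩, hmem, hrefl, -, -⟩ := h
  have hsub : ∀ Q ∈ P, ∀ q₀ ∈ Q, Q ⊆ eqClass ρ q₀ := fun Q hQ q₀ hq₀ q hq =>
    ⟨hle _ _ ⟨Q, hQ, Q, hQ, hrefl Q hQ, hq₀, hq⟩, hle _ _ ⟨Q, hQ, Q, hQ, hrefl Q hQ, hq, hq₀⟩⟩
  intro Q R hQR
  obtain ⟨hQ, hR⟩ := hmem Q R hQR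
  obtain ⟨q₀, hq₀⟩ := hne Q hQ
  obtain ⟨r₀, hr₀⟩ := hne R hR
  exact ⟨_, eqClass_mem_eqClasses q₀, _, eqClass_mem_eqClasses r₀, hsub Q hQ q₀ hq₀,
    hsub R hR r₀ hr₀, eqClass_mem_eqClasses q₀, eqClass_mem_eqClasses r₀,
    q₀, hsub Q hQ q₀ hq₀ hq₀, r₀, hsub R hR r₀ hr₀ hr₀, hle _ _ ⟨Q, hQ, R, hR, hQR, hq₀, hr₀⟩⟩

variable [IsPreorder S ρ]

lemma mem_eqClass_self (p : S) : p ∈ eqClass ρ p := ⟨refl_of ρ p, refl_of ρ p⟩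

lemma eqClass_eq {p q : S} (hpq : ρ p q) (hqp : ρ q p) : eqClass ρ p = eqClass ρ q := by
  ext x
  exact ⟨fun hx => ⟨trans_of ρ hqp hx.1, trans_of ρ hx.2 hpq⟩,
    fun hx => ⟨trans_of ρ hpq hx.1, trans_of ρ hx.2 hqp⟩⟩

lemma classLe_eqClass {p q : S} (hpq : ρ p q) : classLe ρ (eqClass ρ p) (eqClass ρ q) :=
  ⟨eqClass_mem_eqClasses p, eqClass_mem_eqClasses q,
    p, mem_eqClass_self p, q, mem_eqClass_self q, hpq⟩

lemma rel_of_classLe {Q T : Set S} {x y : S} (h : classLe ρ Q T) (hx : x ∈ Q) (hy : y ∈ T) :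
    ρ x y := by
  obtain ⟨⟨c, rfl⟩, ⟨d, rfl⟩, p, hp, q, hq, hpq⟩ := h
  exact trans_of ρ (trans_of ρ hx.2 hp.1) (trans_of ρ hpq (trans_of ρ hq.2 hy.1))

lemma isPRP_eqClasses : IsPRP (eqClasses ρ) (classLe ρ) := by
  refine ⟨⟨?_, fun s => ⟨_, eqClass_mem_eqClasses s, mem_eqClass_self s⟩, ?_⟩,
    fun Q T h => ⟨h.1, h.2.1⟩, ?_, ?_, ?_⟩
  · rintro Q ⟨p, rfl⟩
    exact ⟨p, mem_eqClass_self p⟩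
  · rintro Q ⟨p, rfl⟩ T ⟨q, rfl⟩ ⟨r, hpr, hqr⟩
    exact eqClass_eq (trans_of ρ hpr.1 hqr.2) (trans_of ρ hqr.1 hpr.2)
  · rintro Q ⟨p, rfl⟩
    exact classLe_eqClass (refl_of ρ p)
  · intro Q T hQT hTQ
    obtain ⟨p, rfl⟩ := hQT.1
    obtain ⟨q, rfl⟩ := hQT.2.1
    exact eqClass_eq (rel_of_classLe hQT (mem_eqClass_self p) (mem_eqClass_self q))
      (rel_of_classLe hTQ (mem_eqClass_self q) (mem_eqClass_self p))
  · intro Q R T hQR hRT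
    obtain ⟨p, rfl⟩ := hQR.1
    obtain ⟨r, rfl⟩ := hQR.2.1
    obtain ⟨q, rfl⟩ := hRT.2.1
    exact classLe_eqClass <| trans_of ρ
      (rel_of_classLe hQR (mem_eqClass_self p) (mem_eqClass_self r))
      (rel_of_classLe hRT (mem_eqClass_self r) (mem_eqClass_self q))

lemma isStable_eqClasses {tm : S → Prop} {tr : S → A → S → Prop} {B : Set A}
    (hPB : IsPB tm tr B ρ) : IsStable tm tr B (eqClasses ρ) (classLe ρ) := by
  refine ⟨?_, ?_, ?_, ?_⟩
  · rintro Q ⟨p, rfl⟩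
    by_cases htp : tm p
    · exact Or.inl fun q hq => (hPB p q hq.1).1 htp
    · exact Or.inr fun q hq htq => htp ((hPB q p hq.2).1 htq)
  · intro Q R hQR hQ r hr
    obtain ⟨p, rfl⟩ := hQR.1
    exact (hPB p r (rel_of_classLe hQR (mem_eqClass_self p) hr)).1 (hQ p (mem_eqClass_self p))
  · rintro Q Q' R hR hQQ' a ⟨x, hx, x', hx', hxx'⟩ y hy
    obtain ⟨y', hyy', hxy'⟩ := (hPB x y (rel_of_classLe hQQ' hx hy)).2.1 a x' hxx'
    exact ⟨y', ⟨_, eqClass_mem_eqClasses y', ⟨hR, eqClass_mem_eqClasses y', x', hx', y',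
      mem_eqClass_self y', hxy'⟩, mem_eqClass_self y'⟩, hyy'⟩
  · rintro Q Q' R hR hQQ' b hb ⟨x, hx, x', hx', hxx'⟩ y hy
    obtain ⟨y', hyy', hyx'⟩ := (hPB y x (rel_of_classLe hQQ' hy hx)).2.2 b x' hb hxx'
    exact ⟨y', ⟨_, eqClass_mem_eqClasses y', ⟨eqClass_mem_eqClasses y', hR, y',
      mem_eqClass_self y', x', hx', hyx'⟩, mem_eqClass_self y'⟩, hyy'⟩

end Quotient

/-- stable partition-relation pairs are upward ◁-directed. -/
theorem stable_directed (tm : S → Prop) (tr : S → A → S → Prop) (B : Set A)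
    (P₁ : Set (Set S)) (le₁ : Set S → Set S → Prop)
    (P₂ : Set (Set S)) (le₂ : Set S → Set S → Prop)
    (h₁ : IsPRP P₁ le₁) (hs₁ : IsStable tm tr B P₁ le₁)
    (h₂ : IsPRP P₂ le₂) (hs₂ : IsStable tm tr B P₂ le₂) :
    ∃ (P₃ : Set (Set S)) (le₃ : Set S → Set S → Prop),
      IsPRP P₃ le₃ ∧ IsStable tm tr B P₃ le₃ ∧
      Lhd P₁ le₁ P₃ le₃ ∧ Lhd P₂ le₂ P₃ le₃ := by
  refine ⟨eqClasses (PbLe tm tr B), classLe (PbLe tm tr B), isPRP_eqClasses,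
    isStable_eqClasses (isPB_pbLe tm tr B), ?_, ?_⟩
  · exact lhd_eqClasses_of_indRel_le h₁ fun p q hpq => ⟨_, isPB_indRel tm tr B h₁ hs₁, hpq⟩
  · exact lhd_eqClasses_of_indRel_le h₂ fun p q hpq => ⟨_, isPB_indRel tm tr B h₂ hs₂, hpq⟩
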